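/- Let G be a countable abelian group, H a Hilbert space, (U^g) a unitary representation, and p an ultrafilter on G. Then Ker(U^{−p+p}) = Ker(U^p). Consequently, (H,U) is 𝒰-mixing if and only if it is Δ(𝒰)-mixing, where Δ(𝒰) = {−p+p : p ∈ 𝒰}. -/

import Mathlib

/-- `V` is the weak-operator-topology limit of the operators `U g` along the
ultrafilter `p`. -/
def IsWOTLimit {G : Type*} {H : Type*} [NormedAddCommGroup H] [InnerProductSpace ℂ H]
    (U : G → (H →L[ℂ] H)) (p : Ultrafilter G) (V : H →L[ℂ] H) : Prop :=
  ∀ f f' : H,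
    Filter.Tendsto (fun g => (inner ℂ f (U g f') : ℂ)) (p : Filter G)
      (nhds (inner ℂ f (V f')))

/-- The sum `p + q` of two ultrafilters on an additive group. -/
def ultraAdd {G : Type*} [AddCommGroup G] (p q : Ultrafilter G) : Ultrafilter G :=
  p.bind fun g => q.map fun h => g + h

/-!
Write `V = U^p`. For `a, b ∈ G` unitarity gives `⟪f, U^{-a+b} f'⟫ = ⟪U^a f, U^b f'⟫`;
letting first `b → p` and then `a → p` shows that `U^{-p+p}` is the weak limit `V* V`,
whose kernel is that of `V`.
-/

open Filter Topology ContinuousLinearMap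

theorem Filter.tendsto_bind_of_forall_tendsto {α β γ : Type*} [TopologicalSpace γ]
    {f : Filter α} {m : α → Filter β} {φ : β → γ} {ψ : α → γ} {c : γ}
    (hm : ∀ a, Tendsto φ (m a) (𝓝 (ψ a))) (hψ : Tendsto ψ f (𝓝 c)) :
    Tendsto φ (f.bind m) (𝓝 c) := by
  refine (nhds_basis_opens c).tendsto_right_iff.2 fun s ⟨hc, hs⟩ => eventually_bind.2 ?_
  filter_upwards [hψ (hs.mem_nhds hc)] with a ha
  exact hm a (hs.mem_nhds ha)

theorem tendsto_ultraAdd {G γ : Type*} [AddCommGroup G] [TopologicalSpace γ]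
    {p q : Ultrafilter G} {φ : G → γ} {ψ : G → γ} {c : γ}
    (hq : ∀ a, Tendsto (fun b => φ (a + b)) q (𝓝 (ψ a))) (hp : Tendsto ψ p (𝓝 c)) :
    Tendsto φ (ultraAdd p q) (𝓝 c) :=
  tendsto_bind_of_forall_tendsto hq hp

section Representation

variable {G H : Type*} [NormedAddCommGroup H] [InnerProductSpace ℂ H]
  {U : G → H →L[ℂ] H} {p : Ultrafilter G} {V W : H →L[ℂ] H}

theorem IsWOTLimit.unique (hV : IsWOTLimit U p V) (hW : IsWOTLimit U p W) : V = W :=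
  ext fun f' => ext_inner_left ℂ fun f => tendsto_nhds_unique (hV f f') (hW f f')

theorem IsWOTLimit.tendsto_inner_left (hV : IsWOTLimit U p V) (f f' : H) :
    Tendsto (fun g => inner ℂ (U g f) f') p (𝓝 (inner ℂ (V f) f')) := by
  simpa only [Function.comp_def, inner_conj_symm] using
    (Complex.continuous_conj.tendsto _).comp (hV f' f)

variable [AddCommGroup G] [CompleteSpace H]

theorem adjoint_eq_apply_neg (hrep : ∀ g h : G, U (g + h) = U g ∘L U h) (hzero : U 0 = 1)
    (hisom : ∀ g : G, adjoint (U g) ∘L U g = 1) (a : G) :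
    adjoint (U a) = U (-a) :=
  calc adjoint (U a) = adjoint (U a) ∘L U (a + -a) := by rw [add_neg_cancel, hzero]; rfl
    _ = U (-a) := by rw [hrep, ← comp_assoc, hisom]; rfl

theorem IsWOTLimit.ultraAdd_neg_self (hrep : ∀ g h : G, U (g + h) = U g ∘L U h)
    (hzero : U 0 = 1) (hisom : ∀ g : G, adjoint (U g) ∘L U g = 1) (hV : IsWOTLimit U p V) :
    IsWOTLimit U (ultraAdd (p.map Neg.neg) p) (adjoint V ∘L V) := by
  intro f f'
  rw [comp_apply, adjoint_inner_right]
  refine tendsto_ultraAdd (ψ := fun a => inner ℂ (U (-a) f) (V f')) (fun a => ?_) ?_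
  · convert hV (U (-a) f) f' using 2 with b
    rw [hrep, comp_apply, ← adjoint_inner_left, adjoint_eq_apply_neg hrep hzero hisom]
  · rw [Ultrafilter.coe_map, tendsto_map'_iff]
    simpa only [Function.comp_def, neg_neg] using hV.tendsto_inner_left f (V f')

end Representation

theorem stmt_13_general {G : Type*} [AddCommGroup G]
    {H : Type*} [NormedAddCommGroup H] [InnerProductSpace ℂ H] [CompleteSpace H]
    (U : G → (H →L[ℂ] H))
    (hrep : ∀ g h : G, U (g + h) = U g ∘L U h) (hzero : U 0 = 1)
    (hunit : ∀ g : G,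
      ContinuousLinearMap.adjoint (U g) ∘L U g = 1 ∧
        U g ∘L ContinuousLinearMap.adjoint (U g) = 1)
    (Ulim : Ultrafilter G → (H →L[ℂ] H))
    (hUlim : ∀ p : Ultrafilter G, IsWOTLimit U p (Ulim p)) :
    (∀ p : Ultrafilter G,
        LinearMap.ker ((Ulim (ultraAdd (Ultrafilter.map Neg.neg p) p)) : H →ₗ[ℂ] H) =
          LinearMap.ker ((Ulim p) : H →ₗ[ℂ] H)) ∧
      ∀ 𝒰 : Set (Ultrafilter G),
        ((∀ q ∈ 𝒰, ∀ f : H, Ulim q f = 0) ↔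
          (∀ q ∈ 𝒰, ∀ f : H, Ulim (ultraAdd (Ultrafilter.map Neg.neg q) q) f = 0)) := by
  have hker : ∀ p : Ultrafilter G,
      LinearMap.ker ((Ulim (ultraAdd (Ultrafilter.map Neg.neg p) p)) : H →ₗ[ℂ] H) =
        LinearMap.ker ((Ulim p) : H →ₗ[ℂ] H) := fun p => by
    rw [(hUlim _).unique ((hUlim p).ultraAdd_neg_self hrep hzero fun g => (hunit g).1)]
    exact ker_adjoint_comp_self _
  exact ⟨hker, fun 𝒰 => forall₂_congr fun q _ =>
    forall_congr' fun f => (SetLike.ext_iff.mp (hker q) f).symm⟩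

/-- For a unitary representation of a countable abelian group:
`Ker U^{−p+p} = Ker U^p` for every ultrafilter `p`; consequently, for any set `𝒰`
of ultrafilters, being `𝒰`-mixing is equivalent to being `Δ(𝒰)`-mixing, where
`Δ(𝒰) = {−p+p : p ∈ 𝒰}`. -/
theorem stmt_13 {G : Type*} [AddCommGroup G] [Countable G]
    {H : Type*} [NormedAddCommGroup H] [InnerProductSpace ℂ H] [CompleteSpace H]
    (U : G → (H →L[ℂ] H))
    (hrep : ∀ g h : G, U (g + h) = U g ∘L U h) (hzero : U 0 = 1)
    (hunit : ∀ g : G,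
      ContinuousLinearMap.adjoint (U g) ∘L U g = 1 ∧
        U g ∘L ContinuousLinearMap.adjoint (U g) = 1)
    (Ulim : Ultrafilter G → (H →L[ℂ] H))
    (hUlim : ∀ p : Ultrafilter G, IsWOTLimit U p (Ulim p)) :
    (∀ p : Ultrafilter G,
        LinearMap.ker ((Ulim (ultraAdd (Ultrafilter.map Neg.neg p) p)) : H →ₗ[ℂ] H) =
          LinearMap.ker ((Ulim p) : H →ₗ[ℂ] H)) ∧
      ∀ 𝒰 : Set (Ultrafilter G),
        ((∀ q ∈ 𝒰, ∀ f : H, Ulim q f = 0) ↔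
          (∀ q ∈ 𝒰, ∀ f : H, Ulim (ultraAdd (Ultrafilter.map Neg.neg q) q) f = 0)) :=
  stmt_13_general U hrep hzero hunit Ulim hUlim
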